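/- arXiv:0904.0984 — 2 statements merged into one kernel-verified Lean document; each statement's English description precedes it below -/
import Mathlib

section
/- Let Q and Q̃ be two equivalent probability measures on a measurable space, let S : Ω → ℝ be a nonnegative random variable with ∫ S dQ = 1 and ∫ S dQ̃ = 1, and define the 'dual' measures Q' and Q̃' by dQ'/dQ = S and dQ̃'/dQ̃ = S. Let g : Ω → ℝ be measurable with |g(ω)| ≤ c·S(ω) + d for all ω, where c, d ≥ 0. Then |∫ g dQ − ∫ g dQ̃| ≤ c·‖Q' − Q̃'‖ + d·‖Q − Q̃‖, where ‖·‖ denotes total variation distance. -/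
open MeasureTheory

/-- Total variation distance `2 sup_A |μ(A) − ν(A)|`. -/
noncomputable def tv {Ω : Type*} [MeasurableSpace Ω] (μ ν : Measure Ω) : ℝ :=
  2 * ⨆ A : {A : Set Ω // MeasurableSet A}, |(μ A.1).toReal - (ν A.1).toReal|

/-! With `h = dQ/dQ'`, the difference of the expectations is `∫ (h - 1) g dQ'`, which the growth
bound on `g` controls by `c ∫ |(h - 1) S| dQ' + d ∫ |h - 1| dQ'`. For `φ ≥ 0` the function
`(h - 1) φ` is a `Q'`-density of the signed measure `φQ - φQ'`, so splitting `∫ |(h - 1) φ| dQ'`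
along the sign of `(h - 1) φ` bounds it by `tv (φQ) (φQ')`; take `φ = S` and `φ = 1`. -/

section

variable {Ω : Type*} [MeasurableSpace Ω]

lemma two_mul_abs_sub_le_tv (μ ν : Measure Ω) [IsFiniteMeasure μ] [IsFiniteMeasure ν]
    {A : Set Ω} (hA : MeasurableSet A) : 2 * |(μ A).toReal - (ν A).toReal| ≤ tv μ ν := by
  have hbdd : BddAbove (Set.range fun B : {B : Set Ω // MeasurableSet B} =>
      |(μ B.1).toReal - (ν B.1).toReal|) := by
    refine ⟨(μ Set.univ).toReal + (ν Set.univ).toReal, ?_⟩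
    rintro x ⟨B, rfl⟩
    refine (abs_sub _ _).trans (add_le_add ?_ ?_) <;>
      rw [abs_of_nonneg ENNReal.toReal_nonneg] <;>
      exact ENNReal.toReal_mono (measure_ne_top _ _) (measure_mono (Set.subset_univ _))
  exact mul_le_mul_of_nonneg_left (le_ciSup hbdd ⟨A, hA⟩) zero_le_two

lemma integral_abs_le_tv {ρ μ ν : Measure Ω} [IsFiniteMeasure μ] [IsFiniteMeasure ν]
    {f : Ω → ℝ} (hfm : Measurable f) (hfi : Integrable f ρ)
    (hf : ∀ B, MeasurableSet B → ∫ x in B, f x ∂ρ = (μ B).toReal - (ν B).toReal) :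
    ∫ x, |f x| ∂ρ ≤ tv μ ν := by
  have hpos : MeasurableSet {x | 0 ≤ f x} := measurableSet_le measurable_const hfm
  have hneg : MeasurableSet {x | f x ≤ 0} := measurableSet_le hfm measurable_const
  have htv_pos := two_mul_abs_sub_le_tv μ ν hpos
  have htv_neg := two_mul_abs_sub_le_tv μ ν hneg
  have hsplit := integral_norm_eq_pos_sub_neg hfi
  simp only [Real.norm_eq_abs, hf _ hpos, hf _ hneg] at hsplit
  rw [hsplit]
  linarith [le_abs_self ((μ {x | 0 ≤ f x}).toReal - (ν {x | 0 ≤ f x}).toReal),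
    neg_abs_le ((μ {x | f x ≤ 0}).toReal - (ν {x | f x ≤ 0}).toReal)]

lemma toReal_withDensity_ofReal_apply (ρ : Measure Ω) {φ : Ω → ℝ} (hφnn : ∀ ω, 0 ≤ φ ω)
    (hφint : Integrable φ ρ) {B : Set Ω} (hB : MeasurableSet B) :
    ((ρ.withDensity fun ω => ENNReal.ofReal (φ ω)) B).toReal = ∫ ω in B, φ ω ∂ρ := by
  rw [withDensity_apply _ hB,
    ← ofReal_integral_eq_lintegral_ofReal hφint.restrict (Filter.Eventually.of_forall hφnn),
    ENNReal.toReal_ofReal (integral_nonneg hφnn)]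

section RnDeriv

variable {μ ν : Measure Ω} [Measure.HaveLebesgueDecomposition μ ν] [SigmaFinite μ]

lemma integrable_toReal_rnDeriv_sub_one_mul (hμν : μ ≪ ν) {f : Ω → ℝ} (hfμ : Integrable f μ)
    (hfν : Integrable f ν) : Integrable (fun x => ((μ.rnDeriv ν x).toReal - 1) * f x) ν := by
  simp only [sub_mul, one_mul]
  exact ((integrable_rnDeriv_smul_iff hμν).mpr hfμ).sub hfν

lemma setIntegral_toReal_rnDeriv_sub_one_mul (hμν : μ ≪ ν) {f : Ω → ℝ} (hfμ : Integrable f μ)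
    (hfν : Integrable f ν) {B : Set Ω} (hB : MeasurableSet B) :
    ∫ x in B, ((μ.rnDeriv ν x).toReal - 1) * f x ∂ν = ∫ x in B, f x ∂μ - ∫ x in B, f x ∂ν := by
  rw [← setIntegral_rnDeriv_smul hμν hB,
    ← integral_sub ((integrable_rnDeriv_smul_iff hμν).mpr hfμ).integrableOn hfν.integrableOn]
  simp only [smul_eq_mul, sub_mul, one_mul]

lemma integral_toReal_rnDeriv_sub_one_mul (hμν : μ ≪ ν) {f : Ω → ℝ} (hfμ : Integrable f μ)
    (hfν : Integrable f ν) :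
    ∫ x, ((μ.rnDeriv ν x).toReal - 1) * f x ∂ν = ∫ x, f x ∂μ - ∫ x, f x ∂ν := by
  simpa using setIntegral_toReal_rnDeriv_sub_one_mul hμν hfμ hfν MeasurableSet.univ

lemma integral_abs_toReal_rnDeriv_sub_one_mul_le_tv (hμν : μ ≪ ν) {φ : Ω → ℝ}
    (hφm : Measurable φ) (hφnn : ∀ x, 0 ≤ φ x) (hφμ : Integrable φ μ) (hφν : Integrable φ ν) :
    ∫ x, |((μ.rnDeriv ν x).toReal - 1) * φ x| ∂ν ≤
      tv (μ.withDensity fun x => ENNReal.ofReal (φ x))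
        (ν.withDensity fun x => ENNReal.ofReal (φ x)) := by
  have := isFiniteMeasure_withDensity_ofReal hφμ.2
  have := isFiniteMeasure_withDensity_ofReal hφν.2
  refine integral_abs_le_tv (((Measure.measurable_rnDeriv μ ν).ennreal_toReal.sub_const 1).mul hφm)
    (integrable_toReal_rnDeriv_sub_one_mul hμν hφμ hφν) fun B hB => ?_
  rw [setIntegral_toReal_rnDeriv_sub_one_mul hμν hφμ hφν hB,
    toReal_withDensity_ofReal_apply μ hφnn hφμ hB, toReal_withDensity_ofReal_apply ν hφnn hφν hB]

end RnDeriv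

end

theorem stmt_1_general {Ω : Type*} [MeasurableSpace Ω] (Q Q' : Measure Ω)
    [IsProbabilityMeasure Q] [IsProbabilityMeasure Q'] (h1 : Q ≪ Q')
    (S : Ω → ℝ) (hSmeas : Measurable S) (hSnn : ∀ ω, 0 ≤ S ω)
    (hSint : Integrable S Q) (hSint' : Integrable S Q')
    (g : Ω → ℝ) (c d : ℝ) (hc : 0 ≤ c) (hd : 0 ≤ d)
    (hbound : ∀ ω, |g ω| ≤ c * S ω + d)
    (hgint : Integrable g Q) (hgint' : Integrable g Q') :
    |∫ ω, g ω ∂Q - ∫ ω, g ω ∂Q'| ≤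
      c * tv (Q.withDensity fun ω => ENNReal.ofReal (S ω))
            (Q'.withDensity fun ω => ENNReal.ofReal (S ω))
      + d * tv Q Q' := by
  set r : Ω → ℝ := fun ω => (Q.rnDeriv Q' ω).toReal - 1
  have hS := integrable_toReal_rnDeriv_sub_one_mul h1 hSint hSint'
  have hone := integrable_toReal_rnDeriv_sub_one_mul h1 (integrable_const (1 : ℝ))
    (integrable_const 1)
  have hTV : ∫ ω, |r ω * 1| ∂Q' ≤ tv Q Q' := by
    simpa [withDensity_one] using integral_abs_toReal_rnDeriv_sub_one_mul_le_tv h1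
      measurable_const (fun _ => zero_le_one) (integrable_const (1 : ℝ)) (integrable_const 1)
  rw [← integral_toReal_rnDeriv_sub_one_mul h1 hgint hgint']
  calc |∫ ω, r ω * g ω ∂Q'|
      ≤ ∫ ω, |r ω * g ω| ∂Q' := abs_integral_le_integral_abs
    _ ≤ ∫ ω, c * |r ω * S ω| + d * |r ω * 1| ∂Q' := by
        refine integral_mono (integrable_toReal_rnDeriv_sub_one_mul h1 hgint hgint').abs
          (hS.abs.const_mul c |>.add (hone.abs.const_mul d)) fun ω => ?_
        simp only [abs_mul, mul_one, abs_of_nonneg (hSnn ω)]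
        nlinarith [hbound ω, abs_nonneg (r ω)]
    _ = c * ∫ ω, |r ω * S ω| ∂Q' + d * ∫ ω, |r ω * 1| ∂Q' := by
        rw [integral_add (hS.abs.const_mul c) (hone.abs.const_mul d), integral_const_mul,
          integral_const_mul]
    _ ≤ _ := add_le_add
        (mul_le_mul_of_nonneg_left
          (integral_abs_toReal_rnDeriv_sub_one_mul_le_tv h1 hSmeas hSnn hSint hSint') hc)
        (mul_le_mul_of_nonneg_left hTV hd)

theorem stmt_1 {Ω : Type*} [MeasurableSpace Ω] (Q Q' : Measure Ω)
    [IsProbabilityMeasure Q] [IsProbabilityMeasure Q'] (h1 : Q ≪ Q') (h2 : Q' ≪ Q)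
    (S : Ω → ℝ) (hSmeas : Measurable S) (hSnn : ∀ ω, 0 ≤ S ω)
    (hSint : Integrable S Q) (hSint' : Integrable S Q')
    (hS1 : ∫ ω, S ω ∂Q = 1) (hS1' : ∫ ω, S ω ∂Q' = 1)
    (g : Ω → ℝ) (hg : Measurable g) (c d : ℝ) (hc : 0 ≤ c) (hd : 0 ≤ d)
    (hbound : ∀ ω, |g ω| ≤ c * S ω + d)
    (hgint : Integrable g Q) (hgint' : Integrable g Q') :
    |∫ ω, g ω ∂Q - ∫ ω, g ω ∂Q'| ≤
      c * tv (Q.withDensity fun ω => ENNReal.ofReal (S ω))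
            (Q'.withDensity fun ω => ENNReal.ofReal (S ω))
      + d * tv Q Q' :=
  stmt_1_general Q Q' h1 S hSmeas hSnn hSint hSint' g c d hc hd hbound hgint hgint'
end

section
/- Let Q and Q̃ be probability measures on (Ω, F), S ≥ 0 measurable with ∫S dQ = ∫S dQ̃ = 1, and define Q', Q̃' by densities S w.r.t. Q, Q̃ respectively. If Q̃ ≪ Q with density D = dQ̃/dQ, then Q̃' ≪ Q' on {S > 0} with dQ̃'/dQ' = D on {S > 0}, and ‖Q' − Q̃'‖ = ∫ S·|1 − D| dQ. -/
/-!
Since `Q̃ = D • Q`, the measure `Q̃'` has density `S D` with respect to `Q`, so on `{S > 0}`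
its density with respect to `Q' = S • Q` is `D`, and `Q'(A) - Q̃'(A) = ∫_A h dQ` with
`h = S (1 - D)` and `∫ h dQ = 0`. For such an `h` every `|∫_A h|` is at most
`∫ h⁺ = ½ ∫ |h|`, with equality at `A = {h > 0}`.
-/

open MeasureTheory

section SignedDensity

variable {Ω : Type*} [MeasurableSpace Ω] {μ : Measure Ω} {h : Ω → ℝ}

lemma integral_posPart_eq_half_integral_abs (hh : Integrable h μ) (h0 : ∫ x, h x ∂μ = 0) :
    ∫ x, (h x)⁺ ∂μ = (∫ x, |h x| ∂μ) / 2 := by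
  rw [integral_abs_eq_two_mul_integral_posPart_sub_integral hh, h0]
  ring

lemma setIntegral_le_half_integral_abs (hh : Integrable h μ) (h0 : ∫ x, h x ∂μ = 0)
    (A : Set Ω) : ∫ x in A, h x ∂μ ≤ (∫ x, |h x| ∂μ) / 2 :=
  calc ∫ x in A, h x ∂μ ≤ ∫ x in A, (h x)⁺ ∂μ :=
        setIntegral_mono hh.integrableOn hh.pos_part.integrableOn fun _ => le_posPart _
    _ ≤ ∫ x, (h x)⁺ ∂μ :=
        setIntegral_le_integral hh.pos_part (ae_of_all _ fun _ => posPart_nonneg _)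
    _ = (∫ x, |h x| ∂μ) / 2 := integral_posPart_eq_half_integral_abs hh h0

lemma abs_setIntegral_le_half_integral_abs (hh : Integrable h μ) (h0 : ∫ x, h x ∂μ = 0)
    (A : Set Ω) : |∫ x in A, h x ∂μ| ≤ (∫ x, |h x| ∂μ) / 2 := by
  have hneg := setIntegral_le_half_integral_abs (h := fun x => -h x) hh.neg
    (by rw [integral_neg, h0, neg_zero]) A
  simp only [integral_neg, abs_neg] at hneg
  exact abs_le.2 ⟨by linarith, setIntegral_le_half_integral_abs hh h0 A⟩

lemma setIntegral_pos_eq_half_integral_abs (hm : Measurable h) (hh : Integrable h μ)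
    (h0 : ∫ x, h x ∂μ = 0) : ∫ x in {x | 0 < h x}, h x ∂μ = (∫ x, |h x| ∂μ) / 2 := by
  rw [← integral_indicator (measurableSet_lt measurable_const hm),
    ← integral_posPart_eq_half_integral_abs hh h0]
  congr 1 with x
  simp only [Set.indicator_apply, Set.mem_ofPred_eq, posPart_eq_ite_lt]

lemma iSup_abs_setIntegral_eq_half_integral_abs (hm : Measurable h) (hh : Integrable h μ)
    (h0 : ∫ x, h x ∂μ = 0) :
    ⨆ A : {A : Set Ω // MeasurableSet A}, |∫ x in A, h x ∂μ|
      = (∫ x, |h x| ∂μ) / 2 := by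
  have hbound (A : {A : Set Ω // MeasurableSet A}) :=
    abs_setIntegral_le_half_integral_abs hh h0 A.1
  have : Nonempty {A : Set Ω // MeasurableSet A} := ⟨⟨∅, .empty⟩⟩
  refine le_antisymm (ciSup_le hbound) ?_
  refine le_ciSup_of_le ⟨_, Set.forall_mem_range.2 hbound⟩
    ⟨{x | 0 < h x}, measurableSet_lt measurable_const hm⟩ ?_
  rw [setIntegral_pos_eq_half_integral_abs hm hh h0]
  exact le_abs_self _

lemma tv_eq_integral_abs_of_sub_eq_setIntegral {ν₁ ν₂ : Measure Ω} (hm : Measurable h)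
    (hh : Integrable h μ) (h0 : ∫ x, h x ∂μ = 0)
    (hdiff : ∀ A, MeasurableSet A →
      (ν₁ A).toReal - (ν₂ A).toReal = ∫ x in A, h x ∂μ) :
    tv ν₁ ν₂ = ∫ x, |h x| ∂μ := by
  have hsup :
      (fun A : {A : Set Ω // MeasurableSet A} => |(ν₁ A.1).toReal - (ν₂ A.1).toReal|)
        = fun A => |∫ x in A.1, h x ∂μ| :=
    funext fun A => by rw [hdiff A.1 A.2]
  rw [tv, hsup, iSup_abs_setIntegral_eq_half_integral_abs hm hh h0]
  ring

end SignedDensity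

section WithDensity

variable {Ω : Type*} [MeasurableSpace Ω] {μ ν : Measure Ω}

lemma toReal_withDensity_ofReal_apply_s17 {f : Ω → ℝ} (hf : AEStronglyMeasurable f μ)
    (hf0 : 0 ≤ᵐ[μ] f) {A : Set Ω} (hA : MeasurableSet A) :
    (μ.withDensity (fun x => ENNReal.ofReal (f x)) A).toReal = ∫ x in A, f x ∂μ := by
  rw [withDensity_apply _ hA, integral_eq_lintegral_of_nonneg_ae (ae_restrict_of_ae hf0)
    hf.restrict]

lemma withDensity_eq_withDensity_withDensity_rnDeriv [ν.HaveLebesgueDecomposition μ]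
    (hνμ : ν ≪ μ) {f : Ω → ENNReal} (hf : Measurable f) :
    ν.withDensity f = (μ.withDensity f).withDensity (ν.rnDeriv μ) := by
  conv_lhs => rw [← Measure.withDensity_rnDeriv_eq ν μ hνμ]
  rw [← withDensity_mul _ (Measure.measurable_rnDeriv ν μ) hf, mul_comm,
    withDensity_mul _ hf (Measure.measurable_rnDeriv ν μ)]

lemma rnDeriv_restrict_withDensity_ae_eq [ν.HaveLebesgueDecomposition μ] {f : Ω → ENNReal}
    [SigmaFinite (μ.withDensity f)] (hνμ : ν ≪ μ) (hf : Measurable f)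
    {s : Set Ω} (hs : MeasurableSet s) (hfs : ∀ x ∈ s, f x ≠ 0) :
    ((ν.withDensity f).restrict s).rnDeriv ((μ.withDensity f).restrict s)
      =ᵐ[μ.restrict s] ν.rnDeriv μ := by
  have hac : μ.restrict s ≪ (μ.withDensity f).restrict s := by
    rw [restrict_withDensity hs]
    exact withDensity_absolutelyContinuous' hf.aemeasurable ((ae_restrict_mem hs).mono hfs)
  have hrn : ((ν.withDensity f).restrict s).rnDeriv ((μ.withDensity f).restrict s)
      =ᵐ[(μ.withDensity f).restrict s] ν.rnDeriv μ := by
    rw [withDensity_eq_withDensity_withDensity_rnDeriv hνμ hf,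
      restrict_withDensity hs (ν.rnDeriv μ)]
    exact Measure.rnDeriv_withDensity _ (Measure.measurable_rnDeriv ν μ)
  exact hac.ae_le hrn

end WithDensity

theorem stmt_17 {Ω : Type*} [MeasurableSpace Ω] (Q Qt : Measure Ω)
    [IsProbabilityMeasure Q] [IsProbabilityMeasure Qt]
    (S : Ω → ℝ) (hSmeas : Measurable S) (hSnn : ∀ ω, 0 ≤ S ω)
    (hS1 : ∫ ω, S ω ∂Q = 1) (hS1' : ∫ ω, S ω ∂Qt = 1)
    (hQtQ : Qt ≪ Q) :
    ((Qt.withDensity fun ω => ENNReal.ofReal (S ω)).restrict {ω | 0 < S ω}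
        ≪ (Q.withDensity fun ω => ENNReal.ofReal (S ω)).restrict {ω | 0 < S ω})
    ∧ (((Qt.withDensity fun ω => ENNReal.ofReal (S ω)).restrict {ω | 0 < S ω}).rnDeriv
          ((Q.withDensity fun ω => ENNReal.ofReal (S ω)).restrict {ω | 0 < S ω})
        =ᵐ[Q.restrict {ω | 0 < S ω}] Qt.rnDeriv Q)
    ∧ tv (Q.withDensity fun ω => ENNReal.ofReal (S ω))
          (Qt.withDensity fun ω => ENNReal.ofReal (S ω))
        = ∫ ω, S ω * |1 - (Qt.rnDeriv Q ω).toReal| ∂Q := by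
  have hSint : Integrable S Q := Integrable.of_integral_ne_zero (by rw [hS1]; exact one_ne_zero)
  have hSint' : Integrable S Qt := Integrable.of_integral_ne_zero (by rw [hS1']; exact one_ne_zero)
  have hSE : Measurable fun ω => ENNReal.ofReal (S ω) := hSmeas.ennreal_ofReal
  have := isFiniteMeasure_withDensity_ofReal hSint.hasFiniteIntegral
  have hpos : MeasurableSet {ω | 0 < S ω} := measurableSet_lt measurable_const hSmeas
  refine ⟨?_, rnDeriv_restrict_withDensity_ae_eq hQtQ hSE hpos
    fun ω hω => ENNReal.ofReal_pos.2 hω |>.ne', ?_⟩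
  · rw [withDensity_eq_withDensity_withDensity_rnDeriv hQtQ hSE]
    exact (withDensity_absolutelyContinuous _ _).restrict _
  set D : Ω → ℝ := fun ω => (Qt.rnDeriv Q ω).toReal
  have hDS : Integrable (fun ω => D ω • S ω) Q := (integrable_rnDeriv_smul_iff hQtQ).2 hSint'
  have hdiff (A : Set Ω) (hA : MeasurableSet A) :
      ((Q.withDensity fun ω => ENNReal.ofReal (S ω)) A).toReal
        - ((Qt.withDensity fun ω => ENNReal.ofReal (S ω)) A).toReal
        = ∫ ω in A, S ω - D ω • S ω ∂Q := by
    rw [toReal_withDensity_ofReal_apply_s17 hSmeas.aestronglyMeasurable (ae_of_all _ hSnn) hA,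
      toReal_withDensity_ofReal_apply_s17 hSmeas.aestronglyMeasurable (ae_of_all _ hSnn) hA,
      ← setIntegral_rnDeriv_smul hQtQ hA, integral_sub hSint.integrableOn hDS.integrableOn]
  rw [tv_eq_integral_abs_of_sub_eq_setIntegral (h := fun ω => S ω - D ω • S ω)
    (hSmeas.sub ((Measure.measurable_rnDeriv Qt Q).ennreal_toReal.smul hSmeas))
    (hSint.sub hDS)
    (by rw [integral_sub hSint hDS, integral_rnDeriv_smul hQtQ, hS1, hS1', sub_self])
    hdiff]
  congr 1 with ω
  rw [smul_eq_mul, ← one_sub_mul, mul_comm (1 - D ω), abs_mul, abs_of_nonneg (hSnn ω)]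
end
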